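/- Noninfluence implies nonleakage, and noninfluence implies noninterference_r. -/
import Mathlib


open scoped Classical

universe u v w

variable {S : Type u} {E : Type v} {D : Type w}

def run (φ : E → Set (S × S)) : List E → Set (S × S)
  | [] => {p | p.2 = p.1}
  | e :: es => {p | ∃ m, (p.1, m) ∈ φ e ∧ (m, p.2) ∈ run φ es}

def execution (φ : E → Set (S × S)) (s : S) (es : List E) : Set S :=
  {t | (s, t) ∈ run φ es}

def reachable (φ : E → Set (S × S)) (s0 : S) (s : S) : Prop :=
  ∃ es, (s0, s) ∈ run φ es

def sources (φ : E → Set (S × S)) (kdom : S → E → D) (intf : D → D → Prop) :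
    List E → S → D → Set D
  | [], _, d => {d}
  | e :: es, s, d =>
      {w | ∃ s', (s, s') ∈ φ e ∧ w ∈ sources φ kdom intf es s' d} ∪
      {w | w = kdom s e ∧
        ∃ v s', intf w v ∧ (s, s') ∈ φ e ∧ v ∈ sources φ kdom intf es s' d}

noncomputable def ipurge (φ : E → Set (S × S)) (kdom : S → E → D)
    (intf : D → D → Prop) : List E → D → Set S → List E
  | [], _, _ => []
  | e :: es, d, ss =>
      if ∃ s ∈ ss, kdom s e ∈ sources φ kdom intf (e :: es) s d then
        e :: ipurge φ kdom intf es d {s' | ∃ s ∈ ss, (s, s') ∈ φ e}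
      else ipurge φ kdom intf es d ss

/-- observational equivalence: (s ⊳ es1) ≃d≃ (t ⊳ es2) -/
def obseq (φ : E → Set (S × S)) (vpeq : S → D → S → Prop)
    (s : S) (es1 : List E) (d : D) (t : S) (es2 : List E) : Prop :=
  ∀ s' ∈ execution φ s es1, ∀ t' ∈ execution φ t es2, vpeq s' d t'

/-- step consistent condition of event, with separate hypothesis/conclusion
equivalence relations (used for the Δ-restricted variants). -/
def SCe2 (φ : E → Set (S × S)) (kdom : S → E → D) (intf : D → D → Prop)
    (vpeqH vpeqCon : S → D → S → Prop) (sched : D) (s0 : S) (e : E) : Prop :=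
  ∀ d s t, reachable φ s0 s → reachable φ s0 t → vpeqH s d t → vpeqH s sched t →
    intf (kdom s e) d → vpeqH s (kdom s e) t →
    ∀ s' t', (s, s') ∈ φ e → (t, t') ∈ φ e → vpeqCon s' d t'

/-- locally respects condition of event. -/
def LRe2 (φ : E → Set (S × S)) (kdom : S → E → D) (intf : D → D → Prop)
    (vpeqCon : S → D → S → Prop) (s0 : S) (e : E) : Prop :=
  ∀ d s s', reachable φ s0 s → ¬ intf (kdom s e) d → (s, s') ∈ φ e →
    vpeqCon s d s'

def SCe (φ : E → Set (S × S)) (kdom : S → E → D) (intf : D → D → Prop)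
    (vpeq : S → D → S → Prop) (sched : D) (s0 : S) (e : E) : Prop :=
  SCe2 φ kdom intf vpeq vpeq sched s0 e

def LRe (φ : E → Set (S × S)) (kdom : S → E → D) (intf : D → D → Prop)
    (vpeq : S → D → S → Prop) (s0 : S) (e : E) : Prop :=
  LRe2 φ kdom intf vpeq s0 e

def noninfluence (φ : E → Set (S × S)) (kdom : S → E → D) (intf : D → D → Prop)
    (vpeq : S → D → S → Prop) (sched : D) (s0 : S) : Prop :=
  ∀ d es s t, reachable φ s0 s → reachable φ s0 t → vpeq s sched t →
    (∀ u ∈ sources φ kdom intf es s d, vpeq s u t) →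
    obseq φ vpeq s es d t (ipurge φ kdom intf es d {t})

def weak_noninfluence (φ : E → Set (S × S)) (kdom : S → E → D)
    (intf : D → D → Prop) (vpeq : S → D → S → Prop) (sched : D) (s0 : S) : Prop :=
  ∀ d es1 es2 s t, reachable φ s0 s → reachable φ s0 t →
    (∀ u ∈ sources φ kdom intf es1 s d, vpeq s u t) → vpeq s sched t →
    ipurge φ kdom intf es1 d {s} = ipurge φ kdom intf es2 d {t} →
    obseq φ vpeq s es1 d t es2

def nonleakage (φ : E → Set (S × S)) (kdom : S → E → D) (intf : D → D → Prop)
    (vpeq : S → D → S → Prop) (sched : D) (s0 : S) : Prop :=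
  ∀ d es s t, reachable φ s0 s → reachable φ s0 t → vpeq s sched t →
    (∀ u ∈ sources φ kdom intf es s d, vpeq s u t) →
    obseq φ vpeq s es d t es

def noninterference_r (φ : E → Set (S × S)) (kdom : S → E → D)
    (intf : D → D → Prop) (vpeq : S → D → S → Prop) (s0 : S) : Prop :=
  ∀ d es s, reachable φ s0 s →
    obseq φ vpeq s es d s (ipurge φ kdom intf es d {s})

def noninterference (φ : E → Set (S × S)) (kdom : S → E → D)
    (intf : D → D → Prop) (vpeq : S → D → S → Prop) (s0 : S) : Prop :=
  ∀ d es, obseq φ vpeq s0 es d s0 (ipurge φ kdom intf es d {s0})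

def weak_noninterference_r (φ : E → Set (S × S)) (kdom : S → E → D)
    (intf : D → D → Prop) (vpeq : S → D → S → Prop) (s0 : S) : Prop :=
  ∀ d es1 es2 s, reachable φ s0 s →
    ipurge φ kdom intf es1 d {s} = ipurge φ kdom intf es2 d {s} →
    obseq φ vpeq s es1 d s es2

def weak_noninterference (φ : E → Set (S × S)) (kdom : S → E → D)
    (intf : D → D → Prop) (vpeq : S → D → S → Prop) (s0 : S) : Prop :=
  ∀ d es1 es2,
    ipurge φ kdom intf es1 d {s0} = ipurge φ kdom intf es2 d {s0} →
    obseq φ vpeq s0 es1 d s0 es2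

lemma run_append {φ : E → Set (S × S)} {es1 es2 : List E} {s m t : S}
    (h1 : (s, m) ∈ run φ es1) (h2 : (m, t) ∈ run φ es2) :
    (s, t) ∈ run φ (es1 ++ es2) := by
  induction es1 generalizing s with
  | nil =>
    have : m = s := h1
    simpa [this] using h2
  | cons e es ih =>
    obtain ⟨m', hm', hrun⟩ := h1
    exact ⟨m', hm', ih hrun⟩

lemma reachable_step {φ : E → Set (S × S)} {s0 s s' : S} {e : E}
    (hr : reachable φ s0 s) (hs : (s, s') ∈ φ e) : reachable φ s0 s' := by
  obtain ⟨es, hes⟩ := hr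
  exact ⟨es ++ [e], run_append hes ⟨s', hs, rfl⟩⟩

lemma exec_nonempty {φ : E → Set (S × S)} {s0 : S}
    (henabled : ∀ s e, reachable φ s0 s → ∃ s', (s, s') ∈ φ e)
    (es : List E) {s : S} (hr : reachable φ s0 s) :
    ∃ t, (s, t) ∈ run φ es := by
  induction es generalizing s with
  | nil => exact ⟨s, rfl⟩
  | cons e es ih =>
    obtain ⟨m, hm⟩ := henabled s e hr
    obtain ⟨t, ht⟩ := ih (reachable_step hr hm)
    exact ⟨t, m, hm, ht⟩

/-- noninfluence implies nonleakage, and noninfluence implies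
noninterference_r. -/
theorem noninfluence_implies
    (φ : E → Set (S × S)) (kdom : S → E → D) (intf : D → D → Prop)
    (vpeq : S → D → S → Prop) (sched : D) (s0 : S)
    (hequiv : ∀ d, Equivalence (fun s t => vpeq s d t))
    (hkdom : ∀ s t e, vpeq s sched t → kdom s e = kdom t e)
    (henabled : ∀ s e, reachable φ s0 s → ∃ s', (s, s') ∈ φ e)
    (h : noninfluence φ kdom intf vpeq sched s0) :
    nonleakage φ kdom intf vpeq sched s0 ∧
      noninterference_r φ kdom intf vpeq s0 := by
  have hni_r : noninterference_r φ kdom intf vpeq s0 := by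
    intro d es s hs
    exact h d es s s hs hs ((hequiv sched).refl s)
      (fun u _ => (hequiv u).refl s)
  refine ⟨?_, hni_r⟩
  intro d es s t hs ht hsched hsrc s' hs' t' ht'
  obtain ⟨t'', ht''⟩ := exec_nonempty henabled (ipurge φ kdom intf es d {t}) ht
  have h1 : vpeq s' d t'' := h d es s t hs ht hsched hsrc s' hs' t'' ht''
  have h2 : vpeq t' d t'' := hni_r d es t ht t' ht' t'' ht''
  exact (hequiv d).trans h1 ((hequiv d).symm h2)
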